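/- arXiv:1311.6158 — 5 statements merged into one kernel-verified Lean document; each statement's English description precedes it below -/
import Mathlib

section
/- Let F and G be two sigma-algebras on a probability space, and let C be an event belonging to both F and G such that every set of the form A ∩ C with A ∈ F belongs to G. Then for any integrable random variable V, E[V·1_C | F] = E[ E[V·1_C | G] | F ] almost surely. -/
open MeasureTheory

namespace MeasureTheory

variable {Ω E : Type*} {m m₀ : MeasurableSpace Ω} {μ : Measure Ω}
  [NormedAddCommGroup E] [NormedSpace ℝ E] [CompleteSpace E]

theorem condExp_ae_eq_of_forall_setIntegral_eq (hm : m ≤ m₀) [SigmaFinite (μ.trim hm)]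
    {f g : Ω → E} (hf : Integrable f μ) (hg : Integrable g μ)
    (h : ∀ s, MeasurableSet[m] s → ∫ x in s, g x ∂μ = ∫ x in s, f x ∂μ) :
    μ[g | m] =ᵐ[μ] μ[f | m] :=
  ae_eq_condExp_of_forall_setIntegral_eq hm hf (fun _ _ _ => integrable_condExp.integrableOn)
    (fun s hs _ => (setIntegral_condExp hm hg hs).trans (h s hs))
    stronglyMeasurable_condExp.aestronglyMeasurable

theorem setIntegral_condExp_indicator {m' : MeasurableSpace Ω} (hm' : m' ≤ m₀)
    [SigmaFinite (μ.trim hm')] {C s : Set Ω} {f : Ω → E} (hf : Integrable f μ)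
    (hC : MeasurableSet[m'] C) (hs : MeasurableSet[m₀] s) (hsC : MeasurableSet[m'] (s ∩ C)) :
    ∫ x in s, μ[C.indicator f | m'] x ∂μ = ∫ x in s, C.indicator f x ∂μ :=
  calc ∫ x in s, μ[C.indicator f | m'] x ∂μ
      = ∫ x in s, C.indicator (μ[f | m']) x ∂μ :=
        setIntegral_congr_ae hs <| (condExp_indicator hf hC).mono fun _ hx _ => hx
    _ = ∫ x in s ∩ C, μ[f | m'] x ∂μ := setIntegral_indicator (hm' C hC)
    _ = ∫ x in s ∩ C, f x ∂μ := setIntegral_condExp hm' hf hsC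
    _ = ∫ x in s, C.indicator f x ∂μ := (setIntegral_indicator (hm' C hC)).symm

-- A tower property in which `m'` need not refine `m`: it only has to see `m` on `C`.
theorem condExp_condExp_indicator_of_inter_measurableSet {m' : MeasurableSpace Ω}
    (hm : m ≤ m₀) (hm' : m' ≤ m₀) [SigmaFinite (μ.trim hm)] [SigmaFinite (μ.trim hm')]
    {C : Set Ω} {f : Ω → E} (hf : Integrable f μ) (hC : MeasurableSet[m'] C)
    (htrace : ∀ s, MeasurableSet[m] s → MeasurableSet[m'] (s ∩ C)) :
    μ[μ[C.indicator f | m'] | m] =ᵐ[μ] μ[C.indicator f | m] :=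
  condExp_ae_eq_of_forall_setIntegral_eq hm (hf.indicator (hm' C hC)) integrable_condExp
    fun s hs => setIntegral_condExp_indicator hm' hf hC (hm s hs) (htrace s hs)

end MeasureTheory

theorem stmt_0_general {Ω : Type*} {m0 : MeasurableSpace Ω} (P : Measure Ω) [IsProbabilityMeasure P]
    (F G : MeasurableSpace Ω) (hF : F ≤ m0) (hG : G ≤ m0)
    (C : Set Ω) (hCG : MeasurableSet[G] C)
    (hFC : ∀ A : Set Ω, MeasurableSet[F] A → MeasurableSet[G] (A ∩ C))
    (V : Ω → ℝ) (hV : Integrable V P) :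
    P[fun ω => V ω * C.indicator (fun _ => (1 : ℝ)) ω | F]
      =ᵐ[P] P[P[fun ω => V ω * C.indicator (fun _ => (1 : ℝ)) ω | G] | F] := by
  have hVC : (fun ω => V ω * C.indicator (fun _ => (1 : ℝ)) ω) = C.indicator V := by
    ext ω
    by_cases hω : ω ∈ C <;> simp [hω]
  rw [hVC]
  exact (condExp_condExp_indicator_of_inter_measurableSet hF hG hV hCG hFC).symm

theorem stmt_0 {Ω : Type*} {m0 : MeasurableSpace Ω} (P : Measure Ω) [IsProbabilityMeasure P]
    (F G : MeasurableSpace Ω) (hF : F ≤ m0) (hG : G ≤ m0)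
    (C : Set Ω) (hCF : MeasurableSet[F] C) (hCG : MeasurableSet[G] C)
    (hFC : ∀ A : Set Ω, MeasurableSet[F] A → MeasurableSet[G] (A ∩ C))
    (V : Ω → ℝ) (hV : Integrable V P) :
    P[fun ω => V ω * C.indicator (fun _ => (1 : ℝ)) ω | F]
      =ᵐ[P] P[P[fun ω => V ω * C.indicator (fun _ => (1 : ℝ)) ω | G] | F] :=
  stmt_0_general P F G hF hG C hCG hFC V hV
end

section
/- Let Θ_1, ..., Θ_d be i.i.d. random variables uniformly distributed on [-π, π], let ε ∈ (0,1), and let n be an even natural number. Then E[((1/d) Σ_{i=1}^d (ε cos Θ_i + 1 - ε))^n] ≤ E[((1/(d-1)) Σ_{i=1}^{d-1} (ε cos Θ_i + 1 - ε))^n]. In particular, the return probability P(Z^ε_n = 0) of the lazy simple random walk Z^ε on ℤ^{d-1} (which moves to each of the 2(d-1) neighbors with probability ε/(2(d-1)) and stays put with probability 1-ε) is nonincreasing in d for d ≥ 2. -/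
/-!
The average of `m + 2` numbers is the average of the `m + 2` averages obtained by leaving one
of them out. Since `x ↦ x ^ n` is convex for even `n`, Jensen's inequality bounds the `n`-th power
of the full average pointwise by the mean of the `n`-th powers of the leave-one-out averages.
Under a product measure each leave-one-out average has the law of an average of `m + 1`
independent copies, so integrating gives the inequality.
-/

open MeasureTheory Real

/-- The uniform probability measure on `[-π, π]`. -/
noncomputable def uniformPi : Measure ℝ :=
  (volume (Set.Icc (-π) π))⁻¹ • volume.restrict (Set.Icc (-π) π)

open Finset
open scoped BigOperators

lemma ConvexOn.map_expect_le {ι : Type*} {φ : ℝ → ℝ} {t : Set ℝ} (hφ : ConvexOn ℝ t φ)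
    {s : Finset ι} (hs : s.Nonempty) {p : ι → ℝ} (hp : ∀ i ∈ s, p i ∈ t) :
    φ (𝔼 i ∈ s, p i) ≤ 𝔼 i ∈ s, φ (p i) := by
  have hcard : (0 : ℝ) < #s := by exact_mod_cast hs.card_pos
  simpa [expect_eq_sum_div_card, div_eq_inv_mul, mul_sum, hcard.ne'] using
    hφ.map_sum_le (w := fun _ => (#s : ℝ)⁻¹) (fun _ _ => by positivity)
      (by simp [hcard.ne']) hp

lemma Fin.sum_sum_succAbove {M : Type*} [AddCommGroup M] {m : ℕ} (x : Fin (m + 1) → M) :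
    ∑ j : Fin (m + 1), ∑ i, x (j.succAbove i) = m • ∑ i, x i := by
  have h (j : Fin (m + 1)) : ∑ i, x (j.succAbove i) = ∑ i, x i - x j := by
    rw [Fin.sum_univ_succAbove x j]; abel
  simp only [h, sum_sub_distrib, sum_const]
  rw [succ_nsmul]; abel

lemma Fin.expect_expect_succAbove {m : ℕ} (x : Fin (m + 2) → ℝ) :
    𝔼 j : Fin (m + 2), 𝔼 i, x (j.succAbove i) = 𝔼 i, x i := by
  simp only [Fintype.expect_eq_sum_div_card, Fintype.card_fin, ← sum_div,
    Fin.sum_sum_succAbove, nsmul_eq_mul]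
  push_cast
  field_simp

lemma ConvexOn.map_expect_le_expect_map_expect_succAbove {φ : ℝ → ℝ}
    (hφ : ConvexOn ℝ Set.univ φ) {m : ℕ} (x : Fin (m + 2) → ℝ) :
    φ (𝔼 i, x i) ≤ 𝔼 j : Fin (m + 2), φ (𝔼 i, x (j.succAbove i)) := by
  rw [← Fin.expect_expect_succAbove]
  exact hφ.map_expect_le univ_nonempty fun _ _ => Set.mem_univ _

lemma measurePreserving_comp_succAbove {m : ℕ} {α : Fin (m + 1) → Type*}
    [∀ i, MeasurableSpace (α i)] (μ : ∀ i, Measure (α i)) [∀ i, SigmaFinite (μ i)]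
    (j : Fin (m + 1)) [IsProbabilityMeasure (μ j)] :
    MeasurePreserving (fun x i => x (j.succAbove i)) (Measure.pi μ)
      (Measure.pi fun i => μ (j.succAbove i)) :=
  measurePreserving_snd.comp (measurePreserving_piFinSuccAbove μ j)

lemma integrable_expect {α ι : Type*} [MeasurableSpace α] {μ : Measure α} {s : Finset ι}
    {f : ι → α → ℝ} (hf : ∀ i ∈ s, Integrable (f i) μ) :
    Integrable (fun x => 𝔼 i ∈ s, f i x) μ := by
  simpa only [expect_eq_sum_div_card] using (integrable_finsetSum s hf).div_const _

lemma integral_expect {α ι : Type*} [MeasurableSpace α] {μ : Measure α} (s : Finset ι)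
    {f : ι → α → ℝ} (hf : ∀ i ∈ s, Integrable (f i) μ) :
    ∫ x, 𝔼 i ∈ s, f i x ∂μ = 𝔼 i ∈ s, ∫ x, f i x ∂μ := by
  simp only [expect_eq_sum_div_card, integral_div, integral_finsetSum s hf]

theorem ConvexOn.integral_map_expect_succ_le {φ : ℝ → ℝ} (hφ : ConvexOn ℝ Set.univ φ)
    {α : Type*} [MeasurableSpace α] (μ : Measure α) [IsProbabilityMeasure μ]
    (g : α → ℝ) (m : ℕ)
    (hint₁ : Integrable (fun x : Fin (m + 1) → α => φ (𝔼 i, g (x i)))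
      (Measure.pi fun _ => μ))
    (hint₂ : Integrable (fun x : Fin (m + 2) → α => φ (𝔼 i, g (x i)))
      (Measure.pi fun _ => μ)) :
    ∫ x : Fin (m + 2) → α, φ (𝔼 i, g (x i)) ∂(Measure.pi fun _ => μ)
      ≤ ∫ x : Fin (m + 1) → α, φ (𝔼 i, g (x i)) ∂(Measure.pi fun _ => μ) := by
  have hproj (j : Fin (m + 2)) :=
    measurePreserving_comp_succAbove (fun _ : Fin (m + 2) => μ) j
  have hcomp (j : Fin (m + 2)) :
      ∫ x : Fin (m + 2) → α, φ (𝔼 i, g (x (j.succAbove i))) ∂(Measure.pi fun _ => μ)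
        = ∫ x : Fin (m + 1) → α, φ (𝔼 i, g (x i)) ∂(Measure.pi fun _ => μ) := by
    rw [← (hproj j).map_eq, integral_map (hproj j).aemeasurable]
    exact (hproj j).map_eq ▸ hint₁.aestronglyMeasurable
  have hint (j : Fin (m + 2)) :
      Integrable (fun x : Fin (m + 2) → α => φ (𝔼 i, g (x (j.succAbove i))))
        (Measure.pi fun _ => μ) :=
    (hproj j).integrable_comp_of_integrable hint₁
  calc ∫ x : Fin (m + 2) → α, φ (𝔼 i, g (x i)) ∂(Measure.pi fun _ => μ)
      ≤ ∫ x : Fin (m + 2) → α, 𝔼 j : Fin (m + 2), φ (𝔼 i, g (x (j.succAbove i)))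
          ∂(Measure.pi fun _ => μ) :=
        integral_mono hint₂ (integrable_expect fun j _ => hint j) fun x =>
          hφ.map_expect_le_expect_map_expect_succAbove fun i => g (x i)
    _ = 𝔼 j : Fin (m + 2), ∫ x : Fin (m + 2) → α, φ (𝔼 i, g (x (j.succAbove i)))
          ∂(Measure.pi fun _ => μ) := integral_expect _ fun j _ => hint j
    _ = ∫ x : Fin (m + 1) → α, φ (𝔼 i, g (x i)) ∂(Measure.pi fun _ => μ) := by
        simp_rw [hcomp, Fintype.expect_const]

instance : IsProbabilityMeasure uniformPi :=
  ProbabilityTheory.cond_isProbabilityMeasure_of_finite (by simp [Real.pi_pos]) (by simp)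

lemma abs_mul_cos_add_one_sub_le (ε t : ℝ) : |ε * cos t + 1 - ε| ≤ |ε| + |1 - ε| := by
  calc |ε * cos t + 1 - ε| = |ε * cos t + (1 - ε)| := by ring_nf
    _ ≤ |ε * cos t| + |1 - ε| := abs_add_le _ _
    _ ≤ |ε| + |1 - ε| := by
        rw [abs_mul]
        gcongr
        exact mul_le_of_le_one_right (abs_nonneg ε) (abs_cos_le_one t)

lemma integrable_pow_expect_mul_cos_add_one_sub {ι : Type*} [Fintype ι] [Nonempty ι]
    (ε : ℝ) (n : ℕ) :
    Integrable (fun θ : ι → ℝ => (𝔼 i, (ε * cos (θ i) + 1 - ε)) ^ n)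
      (Measure.pi fun _ => uniformPi) := by
  have hcont : Continuous fun θ : ι → ℝ => (𝔼 i, (ε * cos (θ i) + 1 - ε)) ^ n := by
    simp only [Fintype.expect_eq_sum_div_card]
    fun_prop
  refine Integrable.of_bound hcont.aestronglyMeasurable ((|ε| + |1 - ε|) ^ n)
    (ae_of_all _ fun θ => ?_)
  rw [norm_pow, Real.norm_eq_abs]
  gcongr
  exact (abs_expect_le _ _).trans
    (expect_le univ_nonempty fun i _ => abs_mul_cos_add_one_sub_le ε (θ i))

lemma one_div_card_mul_sum_eq_expect {k : ℕ} (x : Fin k → ℝ) :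
    1 / (k : ℝ) * ∑ i, x i = 𝔼 i, x i := by
  rw [Fintype.expect_eq_sum_div_card, Fintype.card_fin, one_div_mul_eq_div]

theorem stmt_2_general (d : ℕ) (hd : 2 ≤ d) (ε : ℝ)
    (n : ℕ) (hn : Even n) :
    ∫ θ : Fin d → ℝ,
        ((1 / (d : ℝ)) * ∑ i, (ε * Real.cos (θ i) + 1 - ε)) ^ n
        ∂(Measure.pi fun _ : Fin d => uniformPi)
      ≤ ∫ θ : Fin (d - 1) → ℝ,
        ((1 / ((d : ℝ) - 1)) * ∑ i, (ε * Real.cos (θ i) + 1 - ε)) ^ n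
        ∂(Measure.pi fun _ : Fin (d - 1) => uniformPi) := by
  obtain ⟨m, rfl⟩ : ∃ m, d = m + 2 := ⟨d - 2, by omega⟩
  have hcast : ((m + 2 : ℕ) : ℝ) - 1 = ((m + 1 : ℕ) : ℝ) := by push_cast; ring
  simp only [hcast, Nat.add_succ_sub_one, one_div_card_mul_sum_eq_expect]
  exact hn.convexOn_pow.integral_map_expect_succ_le uniformPi (fun t => ε * cos t + 1 - ε) m
    (integrable_pow_expect_mul_cos_add_one_sub ε n)
    (integrable_pow_expect_mul_cos_add_one_sub ε n)

theorem stmt_2 (d : ℕ) (hd : 2 ≤ d) (ε : ℝ) (hε : ε ∈ Set.Ioo (0 : ℝ) 1)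
    (n : ℕ) (hn : Even n) :
    ∫ θ : Fin d → ℝ,
        ((1 / (d : ℝ)) * ∑ i, (ε * Real.cos (θ i) + 1 - ε)) ^ n
        ∂(Measure.pi fun _ : Fin d => uniformPi)
      ≤ ∫ θ : Fin (d - 1) → ℝ,
        ((1 / ((d : ℝ) - 1)) * ∑ i, (ε * Real.cos (θ i) + 1 - ε)) ^ n
        ∂(Measure.pi fun _ : Fin (d - 1) => uniformPi) :=
  stmt_2_general d hd ε n hn
end

section
/- Under the same hypotheses (i)–(iii) as before, if sup_{β∈J} |E[X_n(β)] − E[X(β)]| → 0 as n → ∞, then the joint family (X_n(β))_{n≥1, β∈J} is uniformly integrable. -/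
/-!
For `f ≥ 0` and `C ≥ 0`, `E (f - C)⁺ ≤ E[f; f ≥ C] ≤ 2 E (f - C/2)⁺`, so uniform integrability
amounts to `E (f - C)⁺ = E f - E (f ∧ C)` being uniformly small. Along the sequence, the means
converge uniformly in `β` by hypothesis, and so do the truncated means `E (X_n(β) ∧ C)`, because
`x ↦ x ∧ C` is bounded and `1`-Lipschitz and `X_n(β) → X(β)` in probability uniformly in `β`.
Hence one truncation level, chosen for the limit family `X`, serves all `X_n(β)` with `n`
large, and the finitely many remaining `n` are uniformly integrable by assumption.
-/

open MeasureTheory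

/-- Uniform integrability of a family of nonnegative random variables, in the classical
sense: `sup_i E[X i · 1_{X i ≥ C}]` can be made arbitrarily small for large `C`. -/
def UnifIntFam {Ω I : Type*} [MeasurableSpace Ω] (P : Measure Ω) (X : I → Ω → ℝ) : Prop :=
  ∀ ε > (0 : ℝ), ∃ C : ℝ, ∀ i : I, ∫ ω in {ω | C ≤ X i ω}, X i ω ∂P ≤ ε

section TailIntegral

variable {Ω : Type*} {m0 : MeasurableSpace Ω} {P : Measure Ω} {f g : Ω → ℝ}

lemma setIntegral_setOf_le_anti (hf : Integrable f P) (hnn : ∀ ω, 0 ≤ f ω) {C C' : ℝ}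
    (h : C' ≤ C) : ∫ ω in {ω | C ≤ f ω}, f ω ∂P ≤ ∫ ω in {ω | C' ≤ f ω}, f ω ∂P :=
  setIntegral_mono_set hf.integrableOn (.of_forall hnn) (.of_forall fun _ hω => h.trans hω)

lemma integral_max_sub_zero_eq [IsFiniteMeasure P] (hf : Integrable f P) (C : ℝ) :
    ∫ ω, max (f ω - C) 0 ∂P = ∫ ω, f ω ∂P - ∫ ω, min (f ω) C ∂P := by
  have hmin : Integrable (fun ω => min (f ω) C) P := hf.inf (integrable_const C)
  rw [← integral_sub hf hmin]
  congr 1 with ω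
  rcases le_total (f ω) C with h | h <;> simp [h]

lemma setIntegral_setOf_two_mul_le [IsFiniteMeasure P] (hf : Integrable f P) (C : ℝ) :
    ∫ ω in {ω | 2 * C ≤ f ω}, f ω ∂P ≤ 2 * ∫ ω, max (f ω - C) 0 ∂P := by
  have hg : Integrable (fun ω => 2 * max (f ω - C) 0) P :=
    ((hf.sub (integrable_const C)).pos_part).const_mul 2
  calc ∫ ω in {ω | 2 * C ≤ f ω}, f ω ∂P
      ≤ ∫ ω in {ω | 2 * C ≤ f ω}, 2 * max (f ω - C) 0 ∂P :=
        setIntegral_mono_on₀ hf.integrableOn hg.integrableOn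
          (aestronglyMeasurable_const.nullMeasurableSet_le hf.aestronglyMeasurable)
          fun ω (hω : 2 * C ≤ f ω) => by linarith [le_max_left (f ω - C) 0]
    _ ≤ ∫ ω, 2 * max (f ω - C) 0 ∂P :=
        setIntegral_le_integral hg (.of_forall fun ω => by positivity)
    _ = 2 * ∫ ω, max (f ω - C) 0 ∂P := integral_const_mul _ _

lemma integral_max_sub_zero_le_setIntegral [IsFiniteMeasure P] (hf : Integrable f P) {C : ℝ}
    (hC : 0 ≤ C) :
    ∫ ω, max (f ω - C) 0 ∂P ≤ ∫ ω in {ω | C ≤ f ω}, f ω ∂P := by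
  have hA : NullMeasurableSet {ω | C ≤ f ω} P :=
    aestronglyMeasurable_const.nullMeasurableSet_le hf.aestronglyMeasurable
  rw [← integral_indicator₀ hA]
  refine integral_mono (hf.sub (integrable_const C)).pos_part (hf.indicator₀ hA) fun ω => ?_
  by_cases hω : C ≤ f ω
  · rw [Set.indicator_of_mem (show ω ∈ {ω | C ≤ f ω} from hω)]
    exact max_le (by linarith) (by linarith)
  · rw [Set.indicator_of_notMem (show ω ∉ {ω | C ≤ f ω} from hω)]
    exact (max_eq_right (by linarith [not_le.mp hω])).le

/-- Truncation at `C` is `1`-Lipschitz and maps `f ≥ 0` into `[0, C]`, so the truncations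
differ by at most `η` off `{η < |f - g|}` and by at most `C` on it. -/
lemma integral_min_sub_integral_min_le [IsProbabilityMeasure P] (hf : Integrable f P)
    (hg : Integrable g P) (hfnn : ∀ ω, 0 ≤ f ω) {C η δ : ℝ} (hC : 0 ≤ C) (hη : 0 ≤ η) (hδ : 0 ≤ δ)
    (hP : P {ω | η < |f ω - g ω|} ≤ ENNReal.ofReal δ) :
    ∫ ω, min (g ω) C ∂P - ∫ ω, min (f ω) C ∂P ≤ η + C * δ := by
  set A := {ω | η < |f ω - g ω|}
  have hA : NullMeasurableSet A P :=
    nullMeasurableSet_lt aemeasurable_const (hf.sub hg).norm.aemeasurable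
  have hmf : Integrable (fun ω => min (f ω) C) P := hf.inf (integrable_const C)
  have hmg : Integrable (fun ω => min (g ω) C) P := hg.inf (integrable_const C)
  have hpt : ∀ ω, min (g ω) C - min (f ω) C ≤ η + A.indicator (fun _ => C) ω := by
    intro ω
    by_cases hω : ω ∈ A
    · rw [Set.indicator_of_mem hω]
      linarith [min_le_right (g ω) C, le_min (hfnn ω) hC]
    · rw [Set.indicator_of_notMem hω, add_zero]
      calc min (g ω) C - min (f ω) C ≤ |min (g ω) C - min (f ω) C| := le_abs_self _
        _ ≤ max |g ω - f ω| |C - C| := abs_min_sub_min_le_max _ _ _ _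
        _ = |f ω - g ω| := by rw [sub_self, abs_zero, max_eq_left (abs_nonneg _), abs_sub_comm]
        _ ≤ η := not_lt.mp hω
  calc ∫ ω, min (g ω) C ∂P - ∫ ω, min (f ω) C ∂P
      = ∫ ω, (min (g ω) C - min (f ω) C) ∂P := (integral_sub hmg hmf).symm
    _ ≤ ∫ ω, (η + A.indicator (fun _ => C) ω) ∂P :=
        integral_mono (hmg.sub hmf)
          ((integrable_const η).add ((integrable_const C).indicator₀ hA)) hpt
    _ = η + P.real A * C := by
        rw [integral_add (integrable_const η) ((integrable_const C).indicator₀ hA),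
          integral_indicator₀ hA, setIntegral_const, integral_const, smul_eq_mul, smul_eq_mul,
          probReal_univ, one_mul]
    _ ≤ η + C * δ := by
        rw [mul_comm]
        gcongr
        exact ENNReal.toReal_le_of_le_ofReal hδ hP

lemma integral_max_sub_zero_le_of_close [IsProbabilityMeasure P] (hf : Integrable f P)
    (hg : Integrable g P) (hfnn : ∀ ω, 0 ≤ f ω) {C η δ : ℝ} (hC : 0 ≤ C) (hη : 0 ≤ η)
    (hδ : 0 ≤ δ) (hP : P {ω | η < |f ω - g ω|} ≤ ENNReal.ofReal δ) :
    ∫ ω, max (f ω - C) 0 ∂P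
      ≤ ∫ ω, max (g ω - C) 0 ∂P + (∫ ω, f ω ∂P - ∫ ω, g ω ∂P) + η + C * δ := by
  rw [integral_max_sub_zero_eq hf, integral_max_sub_zero_eq hg]
  linarith [integral_min_sub_integral_min_le hf hg hfnn hC hη hδ hP]

end TailIntegral

section UnifIntFam

variable {Ω ι : Type*} {m0 : MeasurableSpace Ω} {P : Measure Ω}

lemma UnifIntFam.exists_integral_max_sub_zero_le [IsFiniteMeasure P] {X : ι → Ω → ℝ}
    (h : UnifIntFam P X) (hint : ∀ i, Integrable (X i) P) (hnn : ∀ i ω, 0 ≤ X i ω) {ε : ℝ}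
    (hε : 0 < ε) : ∃ C > 0, ∀ i, ∫ ω, max (X i ω - C) 0 ∂P ≤ ε := by
  obtain ⟨C, hC⟩ := h ε hε
  refine ⟨max C 1, lt_max_of_lt_right one_pos, fun i => ?_⟩
  calc ∫ ω, max (X i ω - max C 1) 0 ∂P
      ≤ ∫ ω in {ω | max C 1 ≤ X i ω}, X i ω ∂P :=
        integral_max_sub_zero_le_setIntegral (hint i) (zero_le_one.trans (le_max_right C 1))
    _ ≤ ∫ ω in {ω | C ≤ X i ω}, X i ω ∂P :=
        setIntegral_setOf_le_anti (hint i) (hnn i) (le_max_left C 1)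
    _ ≤ ε := hC i

lemma exists_forall_lt_setIntegral_setOf_le {X : ℕ → ι → Ω → ℝ}
    (hui : ∀ n, UnifIntFam P (X n)) (hint : ∀ n i, Integrable (X n i) P)
    (hnn : ∀ n i ω, 0 ≤ X n i ω) {ε : ℝ} (hε : 0 < ε) (N : ℕ) (C₀ : ℝ) :
    ∃ C ≥ C₀, ∀ n < N, ∀ i, ∫ ω in {ω | C ≤ X n i ω}, X n i ω ∂P ≤ ε := by
  induction N with
  | zero => exact ⟨C₀, le_rfl, by simp⟩
  | succ N ih =>
    obtain ⟨C, hC₀, hC⟩ := ih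
    obtain ⟨C', hC'⟩ := hui N ε hε
    refine ⟨max C C', hC₀.trans (le_max_left C C'), fun n hn i => ?_⟩
    rcases Nat.lt_succ_iff_lt_or_eq.mp hn with hn | rfl
    · exact (setIntegral_setOf_le_anti (hint n i) (hnn n i) (le_max_left C C')).trans (hC n hn i)
    · exact (setIntegral_setOf_le_anti (hint n i) (hnn n i) (le_max_right C C')).trans (hC' i)

end UnifIntFam

theorem stmt_10 {Ω J : Type*} {m0 : MeasurableSpace Ω} (P : Measure Ω) [IsProbabilityMeasure P]
    (X : ℕ → J → Ω → ℝ) (X0 : J → Ω → ℝ)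
    (hnn : ∀ n β ω, 0 ≤ X n β ω) (h0nn : ∀ β ω, 0 ≤ X0 β ω)
    (hint : ∀ n β, Integrable (X n β) P) (h0int : ∀ β, Integrable (X0 β) P)
    -- (i) for each n, (X n β)_β is uniformly integrable
    (hui_n : ∀ n, UnifIntFam P (X n))
    -- (ii) (X0 β)_β is uniformly integrable
    (hui_0 : UnifIntFam P X0)
    -- (iii) X_n(β) → X0(β) in probability, uniformly in β
    (hconv : ∀ ε > (0 : ℝ), ∀ δ > (0 : ℝ), ∃ N : ℕ, ∀ n ≥ N, ∀ β : J,
      P {ω | ε < |X n β ω - X0 β ω|} ≤ ENNReal.ofReal δ)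
    -- the expectations converge uniformly in β
    (hexp : ∀ ε > (0 : ℝ), ∃ N : ℕ, ∀ n ≥ N, ∀ β : J,
      |∫ ω, X n β ω ∂P - ∫ ω, X0 β ω ∂P| ≤ ε) :
    UnifIntFam P (fun p : ℕ × J => X p.1 p.2) := by
  intro ε hε
  obtain ⟨C₀, hC₀pos, hC₀⟩ :=
    hui_0.exists_integral_max_sub_zero_le h0int h0nn (show 0 < ε / 8 by positivity)
  obtain ⟨N₁, hN₁⟩ := hexp (ε / 8) (by positivity)
  obtain ⟨N₂, hN₂⟩ := hconv (ε / 8) (by positivity) (ε / 8 / C₀) (by positivity)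
  have hlate : ∀ n ≥ max N₁ N₂, ∀ β, ∫ ω, max (X n β ω - C₀) 0 ∂P ≤ ε / 2 := by
    intro n hn β
    have hclose := integral_max_sub_zero_le_of_close (hint n β) (h0int β) (hnn n β)
      hC₀pos.le (by positivity) (by positivity) (hN₂ n (le_of_max_le_right hn) β)
    have hmean := (abs_le.mp (hN₁ n (le_of_max_le_left hn) β)).2
    have hCδ : C₀ * (ε / 8 / C₀) = ε / 8 := by field_simp
    linarith [hC₀ β]
  obtain ⟨C, hC, hearly⟩ :=
    exists_forall_lt_setIntegral_setOf_le (P := P) hui_n hint hnn hε (max N₁ N₂) (2 * C₀)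
  refine ⟨C, fun ⟨n, β⟩ => ?_⟩
  rcases lt_or_ge n (max N₁ N₂) with hn | hn
  · exact hearly n hn β
  · calc ∫ ω in {ω | C ≤ X n β ω}, X n β ω ∂P
        ≤ ∫ ω in {ω | 2 * C₀ ≤ X n β ω}, X n β ω ∂P :=
          setIntegral_setOf_le_anti (hint n β) (hnn n β) hC
      _ ≤ 2 * ∫ ω, max (X n β ω - C₀) 0 ∂P := setIntegral_setOf_two_mul_le (hint n β) C₀
      _ ≤ ε := by linarith [hlate n hn β]
end

section
/- In the setting of Kac's formula: with θ measure-preserving, D measurable with P(D) > 0, T the first return time to D, P̂ = P(·|D), if Ê[T] < ∞ then Ê[T]·E[T] = Ê[(T^2 + T)/2] where on the left E[T] = ∫ T dP and on the right the expectation is under P̂; in particular, if E[T] < ∞ then Ê[T^2] = 2·E[T]·Ê[T] − Ê[T] < ∞. -/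
/-!
Let `T` be the first return time to `D` and `E n` the set of points that avoid `D` at the
times `1, …, n`. Since `θ⁻¹' (Dᶜ ∩ E n) = E (n + 1)` and `θ` preserves `P`,
`∫_{E n} f ∘ θⁿ = ∫_{D ∩ E n} f ∘ θⁿ + ∫_{E (n + 1)} f ∘ θⁿ⁺¹`. Telescoping, and `P (E n) → 0`
because almost every point returns, give `∫ f dP = ∫_D ∑_{k < T} f ∘ θᵏ dP` for bounded `f`,
hence for every `f ≥ 0` by monotone convergence. For `f = 1` this is Kac's formula
`∫_D T dP = 1`, i.e. `Ê[T] = P(D)⁻¹`. For `f = T`, since `T ∘ θᵏ = T - k` for `k < T`, it gives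
`E[T] = ∫_D ∑_{k < T} (T - k) dP = ∫_D (T² + T) / 2 dP = P(D) · Ê[(T² + T) / 2]`.
-/

open MeasureTheory Function ProbabilityTheory Finset Filter Topology
open scoped ENNReal

theorem measurable_sInf_setOf_nat {α : Type*} [MeasurableSpace α] {p : α → ℕ → Prop}
    (hp : ∀ n, MeasurableSet {x | p x n}) : Measurable fun x => sInf {n | p x n} := by
  refine measurable_to_countable' fun n => ?_
  have hpre : (fun x => sInf {n | p x n}) ⁻¹' {n} =
      ({x | p x n} ∩ ⋂ m < n, {x | p x m}ᶜ) ∪ ({_x | n = 0} ∩ ⋂ m, {x | p x m}ᶜ) := by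
    ext x
    by_cases hx : ∃ m, p x m
    · have hmem : p x (sInf {m | p x m}) := Nat.sInf_mem hx
      simp only [Set.mem_preimage, Set.mem_singleton_iff, Set.mem_union, Set.mem_inter_iff,
        Set.mem_ofPred_eq, Set.mem_iInter, Set.mem_compl_iff]
      constructor
      · rintro rfl
        exact Or.inl ⟨hmem, fun m hm => Nat.notMem_of_lt_sInf hm⟩
      · rintro (⟨hn, hlt⟩ | ⟨-, hnone⟩)
        · exact le_antisymm (Nat.sInf_le hn) (not_lt.1 fun h => hlt _ h hmem)
        · exact absurd hmem (hnone _)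
    · push Not at hx
      simp [hx, eq_comm]
  rw [hpre]
  exact ((hp n).inter (.biInter (Set.to_countable _) fun m _ => (hp m).compl)).union
    ((MeasurableSet.const _).inter (.iInter fun m => (hp m).compl))

theorem ENNReal.iSup_min_natCast (a : ℝ≥0∞) : ⨆ m : ℕ, min a m = a := by
  rw [← inf_iSup_eq, ENNReal.iSup_natCast, inf_top_eq]

theorem measurable_sum_range {α : Type*} [MeasurableSpace α] {N : α → ℕ}
    (hN : Measurable N) {g : ℕ → α → ℝ≥0∞} (hg : ∀ k, Measurable (g k)) :
    Measurable fun x => ∑ k ∈ range (N x), g k x :=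
  (measurable_from_prod_countable_left (f := fun p : α × ℕ => ∑ k ∈ range p.2, g k p.1)
    fun n => Finset.measurable_sum (range n) fun k _ => hg k).comp (measurable_id.prodMk hN)

theorem sum_range_sub_mul_two (t : ℕ) : (∑ k ∈ range t, (t - k)) * 2 = t ^ 2 + t := by
  induction t with
  | zero => rfl
  | succ t ih =>
    rw [sum_range_succ', add_mul, Nat.sub_zero]
    simp only [Nat.add_sub_add_right]
    rw [ih]
    ring

theorem ENNReal.sum_range_natCast_sub (t : ℕ) :
    ∑ k ∈ range t, ((t - k : ℕ) : ℝ≥0∞) = ((t : ℝ≥0∞) ^ 2 + t) / 2 := by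
  rw [ENNReal.eq_div_iff two_ne_zero ENNReal.ofNat_ne_top, ← Nat.cast_sum, mul_comm]
  exact_mod_cast sum_range_sub_mul_two t

section FirstReturn

variable {Ω : Type*}

def noReturnUpTo (θ : Ω → Ω) (D : Set Ω) (n : ℕ) : Set Ω :=
  {ω | ∀ j, 0 < j → j ≤ n → θ^[j] ω ∉ D}

-- Equal to `0` on the points that never return to `D`, since `sInf ∅ = 0` in `ℕ`.
noncomputable def firstReturnTime (θ : Ω → Ω) (D : Set Ω) (ω : Ω) : ℕ :=
  sInf {n | 0 < n ∧ θ^[n] ω ∈ D}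

variable {θ : Ω → Ω} {D : Set Ω}

@[simp]
theorem noReturnUpTo_zero : noReturnUpTo θ D 0 = Set.univ :=
  Set.eq_univ_of_forall fun _ _ hj hj0 => absurd hj (by omega)

theorem antitone_noReturnUpTo : Antitone (noReturnUpTo θ D) :=
  fun _ _ hmn _ hω j hj hjn => hω j hj (hjn.trans hmn)

theorem preimage_compl_inter_noReturnUpTo (n : ℕ) :
    θ ⁻¹' (Dᶜ ∩ noReturnUpTo θ D n) = noReturnUpTo θ D (n + 1) := by
  ext ω
  simp only [noReturnUpTo, Set.mem_preimage, Set.mem_inter_iff, Set.mem_compl_iff,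
    Set.mem_ofPred_eq]
  constructor
  · rintro ⟨h1, h⟩ (_ | j) hj hjn
    · omega
    · rw [iterate_succ_apply]
      rcases j with _ | j
      · exact h1
      · exact h (j + 1) j.succ_pos (by omega)
  · intro h
    refine ⟨h 1 one_pos (by omega), fun j hj hjn => ?_⟩
    simpa only [iterate_succ_apply] using h (j + 1) j.succ_pos (by omega)

theorem iInter_noReturnUpTo :
    ⋂ n, noReturnUpTo θ D n = {ω | ¬∃ n, 0 < n ∧ θ^[n] ω ∈ D} := by
  ext ω
  simp only [noReturnUpTo, Set.mem_iInter, Set.mem_ofPred_eq, not_exists, not_and]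
  exact ⟨fun h n hn => h n n hn le_rfl, fun h _ j hj _ => h j hj⟩

section ReturningPoint

variable {ω : Ω} (hω : ∃ n, 0 < n ∧ θ^[n] ω ∈ D)
include hω

theorem firstReturnTime_spec :
    0 < firstReturnTime θ D ω ∧ θ^[firstReturnTime θ D ω] ω ∈ D :=
  Nat.sInf_mem hω

theorem mem_noReturnUpTo_iff (k : ℕ) :
    ω ∈ noReturnUpTo θ D k ↔ k < firstReturnTime θ D ω := by
  refine ⟨fun h => not_le.1 fun hk => h _ (firstReturnTime_spec hω).1 hk
    (firstReturnTime_spec hω).2, fun hk j hj hjk hjD => ?_⟩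
  exact Nat.notMem_of_lt_sInf (hjk.trans_lt hk) ⟨hj, hjD⟩

theorem firstReturnTime_iterate {k : ℕ} (hk : k < firstReturnTime θ D ω) :
    firstReturnTime θ D (θ^[k] ω) = firstReturnTime θ D ω - k := by
  obtain ⟨hpos, hmem⟩ := firstReturnTime_spec hω
  have hS : firstReturnTime θ D ω - k ∈ {n | 0 < n ∧ θ^[n] (θ^[k] ω) ∈ D} := by
    refine ⟨by omega, ?_⟩
    rwa [← iterate_add_apply, Nat.sub_add_cancel hk.le]
  refine le_antisymm (Nat.sInf_le hS) ?_
  obtain ⟨hn, hnD⟩ := Nat.sInf_mem ⟨_, hS⟩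
  rw [← iterate_add_apply] at hnD
  have := Nat.sInf_le (show _ + k ∈ {n | 0 < n ∧ θ^[n] ω ∈ D} from ⟨by omega, hnD⟩)
  unfold firstReturnTime at *
  omega

end ReturningPoint

section Measure

variable [MeasurableSpace Ω] {P : Measure Ω}

theorem measurableSet_noReturnUpTo (hθ : Measurable θ) (hD : MeasurableSet D) (n : ℕ) :
    MeasurableSet (noReturnUpTo θ D n) := by
  have : noReturnUpTo θ D n = ⋂ j, ⋂ (_ : 0 < j), ⋂ (_ : j ≤ n), θ^[j] ⁻¹' Dᶜ := by
    ext ω; simp [noReturnUpTo]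
  rw [this]
  exact .iInter fun j => .iInter fun _ => .iInter fun _ => hθ.iterate j hD.compl

theorem measurable_firstReturnTime (hθ : Measurable θ) (hD : MeasurableSet D) :
    Measurable (firstReturnTime θ D) :=
  measurable_sInf_setOf_nat fun n =>
    (MeasurableSet.const (0 < n)).inter (hθ.iterate n hD)

theorem tendsto_measure_noReturnUpTo [IsFiniteMeasure P] (hθ : Measurable θ)
    (hD : MeasurableSet D) (hret : ∀ᵐ ω ∂P, ∃ n, 0 < n ∧ θ^[n] ω ∈ D) :
    Tendsto (fun n => P (noReturnUpTo θ D n)) atTop (𝓝 0) := by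
  have hnull : P (⋂ n, noReturnUpTo θ D n) = 0 := by
    rwa [iInter_noReturnUpTo, ← ae_iff]
  rw [← hnull]
  exact tendsto_measure_iInter_atTop
    (fun n => (measurableSet_noReturnUpTo hθ hD n).nullMeasurableSet) antitone_noReturnUpTo
    ⟨0, measure_ne_top P _⟩

theorem setLIntegral_noReturnUpTo_eq_add (hθ : MeasurePreserving θ P P) (hD : MeasurableSet D)
    {f : Ω → ℝ≥0∞} (hf : Measurable f) (n : ℕ) :
    ∫⁻ ω in noReturnUpTo θ D n, f (θ^[n] ω) ∂P =
      ∫⁻ ω in D ∩ noReturnUpTo θ D n, f (θ^[n] ω) ∂P +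
        ∫⁻ ω in noReturnUpTo θ D (n + 1), f (θ^[n + 1] ω) ∂P := by
  have hE := measurableSet_noReturnUpTo hθ.measurable hD n
  have hshift : ∫⁻ ω in noReturnUpTo θ D (n + 1), f (θ^[n + 1] ω) ∂P =
      ∫⁻ ω in Dᶜ ∩ noReturnUpTo θ D n, f (θ^[n] ω) ∂P := by
    simp_rw [← preimage_compl_inter_noReturnUpTo, iterate_succ_apply]
    exact hθ.setLIntegral_comp_preimage (hD.compl.inter hE) (hf.comp (hθ.measurable.iterate n))
  rw [hshift, ← Measure.restrict_restrict hD, ← Measure.restrict_restrict hD.compl,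
    lintegral_add_compl _ hD]

theorem lintegral_eq_sum_add_setLIntegral_noReturnUpTo (hθ : MeasurePreserving θ P P)
    (hD : MeasurableSet D) {f : Ω → ℝ≥0∞} (hf : Measurable f) (n : ℕ) :
    ∫⁻ ω, f ω ∂P =
      ∑ k ∈ range n, ∫⁻ ω in D ∩ noReturnUpTo θ D k, f (θ^[k] ω) ∂P +
        ∫⁻ ω in noReturnUpTo θ D n, f (θ^[n] ω) ∂P := by
  induction n with
  | zero => simp
  | succ n ih => rw [ih, setLIntegral_noReturnUpTo_eq_add hθ hD hf, sum_range_succ, add_assoc]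

theorem lintegral_eq_tsum_setLIntegral_noReturnUpTo_of_le [IsFiniteMeasure P]
    (hθ : MeasurePreserving θ P P) (hD : MeasurableSet D)
    (hret : ∀ᵐ ω ∂P, ∃ n, 0 < n ∧ θ^[n] ω ∈ D) {f : Ω → ℝ≥0∞} (hf : Measurable f)
    {C : ℝ≥0∞} (hC : C ≠ ∞) (hfC : ∀ ω, f ω ≤ C) :
    ∫⁻ ω, f ω ∂P = ∑' k, ∫⁻ ω in D ∩ noReturnUpTo θ D k, f (θ^[k] ω) ∂P := by
  have hrest : Tendsto (fun n => ∫⁻ ω in noReturnUpTo θ D n, f (θ^[n] ω) ∂P) atTop (𝓝 0) := by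
    refine tendsto_of_tendsto_of_tendsto_of_le_of_le tendsto_const_nhds ?_ (fun _ => zero_le)
      fun n => setLIntegral_mono measurable_const fun ω _ => hfC (θ^[n] ω)
    simpa [setLIntegral_const] using
      ENNReal.Tendsto.const_mul (tendsto_measure_noReturnUpTo hθ.measurable hD hret) (.inr hC)
  have hsum := (ENNReal.tendsto_nat_tsum
    fun k => ∫⁻ ω in D ∩ noReturnUpTo θ D k, f (θ^[k] ω) ∂P).add hrest
  simp_rw [← lintegral_eq_sum_add_setLIntegral_noReturnUpTo hθ hD hf, add_zero] at hsum
  exact tendsto_nhds_unique tendsto_const_nhds hsum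

theorem tsum_setLIntegral_noReturnUpTo (hθ : Measurable θ) (hD : MeasurableSet D)
    (hret : ∀ᵐ ω ∂P, ∃ n, 0 < n ∧ θ^[n] ω ∈ D) {f : Ω → ℝ≥0∞} (hf : Measurable f) :
    ∑' k, ∫⁻ ω in D ∩ noReturnUpTo θ D k, f (θ^[k] ω) ∂P =
      ∫⁻ ω in D, ∑ k ∈ range (firstReturnTime θ D ω), f (θ^[k] ω) ∂P := by
  have hE := measurableSet_noReturnUpTo hθ hD
  simp_rw [← lintegral_indicator (hD.inter (hE _)), ← lintegral_indicator hD]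
  rw [← lintegral_tsum fun k => (Measurable.indicator (f := fun ω => f (θ^[k] ω))
    (hf.comp (hθ.iterate k)) (hD.inter (hE k))).aemeasurable]
  refine lintegral_congr_ae (hret.mono fun ω hω => ?_)
  by_cases hωD : ω ∈ D
  · rw [Set.indicator_of_mem hωD, sum_eq_tsum_indicator]
    refine tsum_congr fun k => ?_
    simp only [Set.indicator, Set.mem_inter_iff, hωD, true_and, mem_noReturnUpTo_iff hω,
      coe_range, Set.mem_Iio]
  · simp [hωD]

theorem lintegral_eq_setLIntegral_sum_firstReturnTime [IsFiniteMeasure P]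
    (hθ : MeasurePreserving θ P P) (hD : MeasurableSet D)
    (hret : ∀ᵐ ω ∂P, ∃ n, 0 < n ∧ θ^[n] ω ∈ D) {f : Ω → ℝ≥0∞} (hf : Measurable f) :
    ∫⁻ ω, f ω ∂P = ∫⁻ ω in D, ∑ k ∈ range (firstReturnTime θ D ω), f (θ^[k] ω) ∂P := by
  set T := firstReturnTime θ D
  have hT : Measurable T := measurable_firstReturnTime hθ.measurable hD
  have hfm (m : ℕ) : Measurable fun ω => min (f ω) m := hf.min measurable_const
  have hmono (x : ℝ≥0∞) : Monotone fun m : ℕ => min x m :=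
    fun _ _ h => min_le_min_left x (Nat.cast_le.2 h)
  have htrunc (m : ℕ) : ∫⁻ ω, min (f ω) m ∂P =
      ∫⁻ ω in D, ∑ k ∈ range (T ω), min (f (θ^[k] ω)) m ∂P := by
    rw [lintegral_eq_tsum_setLIntegral_noReturnUpTo_of_le hθ hD hret (hfm m)
      (ENNReal.natCast_ne_top m) fun _ => min_le_right _ _,
      tsum_setLIntegral_noReturnUpTo hθ.measurable hD hret (hfm m)]
  have hsum_meas (m : ℕ) : Measurable fun ω => ∑ k ∈ range (T ω), min (f (θ^[k] ω)) m :=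
    measurable_sum_range hT fun k => (hfm m).comp (hθ.measurable.iterate k)
  calc ∫⁻ ω, f ω ∂P = ⨆ m : ℕ, ∫⁻ ω, min (f ω) m ∂P := by
        rw [← lintegral_iSup hfm fun m n h ω => hmono (f ω) h]
        simp_rw [ENNReal.iSup_min_natCast]
    _ = ⨆ m : ℕ, ∫⁻ ω in D, ∑ k ∈ range (T ω), min (f (θ^[k] ω)) m ∂P := iSup_congr htrunc
    _ = ∫⁻ ω in D, ∑ k ∈ range (T ω), f (θ^[k] ω) ∂P := by
        rw [← lintegral_iSup hsum_meas fun m n h ω => sum_le_sum fun k _ => hmono _ h]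
        simp_rw [← ENNReal.finsetSum_iSup_of_monotone fun k => hmono _, ENNReal.iSup_min_natCast]

theorem setLIntegral_firstReturnTime [IsFiniteMeasure P] (hθ : MeasurePreserving θ P P)
    (hD : MeasurableSet D) (hret : ∀ᵐ ω ∂P, ∃ n, 0 < n ∧ θ^[n] ω ∈ D) :
    ∫⁻ ω in D, (firstReturnTime θ D ω : ℝ≥0∞) ∂P = P Set.univ := by
  simpa using (lintegral_eq_setLIntegral_sum_firstReturnTime hθ hD hret
    (measurable_const (a := (1 : ℝ≥0∞)))).symm

theorem lintegral_firstReturnTime [IsFiniteMeasure P] (hθ : MeasurePreserving θ P P)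
    (hD : MeasurableSet D) (hret : ∀ᵐ ω ∂P, ∃ n, 0 < n ∧ θ^[n] ω ∈ D) :
    ∫⁻ ω, (firstReturnTime θ D ω : ℝ≥0∞) ∂P =
      ∫⁻ ω in D, ((firstReturnTime θ D ω : ℝ≥0∞) ^ 2 + firstReturnTime θ D ω) / 2 ∂P := by
  rw [lintegral_eq_setLIntegral_sum_firstReturnTime hθ hD hret
    (f := fun ω => (firstReturnTime θ D ω : ℝ≥0∞))
    (measurable_from_nat.comp (measurable_firstReturnTime hθ.measurable hD))]
  refine setLIntegral_congr_fun_ae hD (hret.mono fun ω hω _ => ?_)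
  rw [sum_congr rfl fun k hk => by rw [firstReturnTime_iterate hω (mem_range.1 hk)],
    ENNReal.sum_range_natCast_sub]

end Measure

end FirstReturn

theorem stmt_12_general {Ω : Type*} {m0 : MeasurableSpace Ω} (P : Measure Ω) [IsProbabilityMeasure P]
    (θ : Ω → Ω) (hθ : MeasurePreserving θ P P)
    (D : Set Ω) (hD : MeasurableSet D)
    (T : Ω → ℕ) (hTdef : ∀ ω, T ω = sInf {n : ℕ | 0 < n ∧ θ^[n] ω ∈ D})
    (hTfin : ∀ᵐ ω ∂P, ∃ n : ℕ, 0 < n ∧ θ^[n] ω ∈ D)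
    (hThat : ∫⁻ ω, (T ω : ENNReal) ∂(P[|D]) < ⊤) :
    (∫⁻ ω, (T ω : ENNReal) ∂(P[|D])) * (∫⁻ ω, (T ω : ENNReal) ∂P)
        = ∫⁻ ω, ((T ω : ENNReal) ^ 2 + (T ω : ENNReal)) / 2 ∂(P[|D])
    ∧ (∫⁻ ω, (T ω : ENNReal) ∂P < ⊤ →
        (∫⁻ ω, (T ω : ENNReal) ^ 2 ∂(P[|D])
            = 2 * (∫⁻ ω, (T ω : ENNReal) ∂P) * (∫⁻ ω, (T ω : ENNReal) ∂(P[|D]))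
              - ∫⁻ ω, (T ω : ENNReal) ∂(P[|D]))
          ∧ ∫⁻ ω, (T ω : ENNReal) ^ 2 ∂(P[|D]) < ⊤) := by
  obtain rfl : T = firstReturnTime θ D := funext hTdef
  have hT : Measurable fun ω => (firstReturnTime θ D ω : ℝ≥0∞) :=
    measurable_from_nat.comp (measurable_firstReturnTime hθ.measurable hD)
  have hcond (g : Ω → ℝ≥0∞) : ∫⁻ ω, g ω ∂P[|D] = (P D)⁻¹ * ∫⁻ ω in D, g ω ∂P := by
    rw [ProbabilityTheory.cond, lintegral_smul_measure, smul_eq_mul]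
  have hKac : ∫⁻ ω, (firstReturnTime θ D ω : ℝ≥0∞) ∂P[|D] = (P D)⁻¹ := by
    rw [hcond, setLIntegral_firstReturnTime hθ hD hTfin, measure_univ, mul_one]
  have hmoment : (∫⁻ ω, (firstReturnTime θ D ω : ℝ≥0∞) ∂P[|D]) *
      ∫⁻ ω, (firstReturnTime θ D ω : ℝ≥0∞) ∂P =
      ∫⁻ ω, ((firstReturnTime θ D ω : ℝ≥0∞) ^ 2 + firstReturnTime θ D ω) / 2 ∂P[|D] := by
    rw [hKac, hcond, lintegral_firstReturnTime hθ hD hTfin]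
  refine ⟨hmoment, fun hfin => ?_⟩
  have hsum : ∫⁻ ω, (firstReturnTime θ D ω : ℝ≥0∞) ^ 2 ∂P[|D] +
      ∫⁻ ω, (firstReturnTime θ D ω : ℝ≥0∞) ∂P[|D] =
      2 * (∫⁻ ω, (firstReturnTime θ D ω : ℝ≥0∞) ∂P) *
        ∫⁻ ω, (firstReturnTime θ D ω : ℝ≥0∞) ∂P[|D] := by
    rw [mul_assoc, mul_comm (∫⁻ ω, _ ∂P), hmoment, ← lintegral_const_mul' _ _
      ENNReal.ofNat_ne_top, ← lintegral_add_left (hT.pow_const 2)]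
    simp_rw [ENNReal.mul_div_cancel two_ne_zero ENNReal.ofNat_ne_top]
  have hsq := ENNReal.eq_sub_of_add_eq hThat.ne hsum
  exact ⟨hsq, hsq ▸ tsub_le_self.trans_lt
    (ENNReal.mul_lt_top (ENNReal.mul_lt_top ENNReal.ofNat_lt_top hfin) hThat)⟩

/-- In the Kac setting, `Ê[T]·E[T] = Ê[(T²+T)/2]`; in particular if `E[T] < ∞` then
`Ê[T²] = 2·E[T]·Ê[T] − Ê[T] < ∞`. -/
theorem stmt_12 {Ω : Type*} {m0 : MeasurableSpace Ω} (P : Measure Ω) [IsProbabilityMeasure P]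
    (θ : Ω → Ω) (hθ : MeasurePreserving θ P P) (hergodic : Ergodic θ P)
    (D : Set Ω) (hD : MeasurableSet D) (hDpos : 0 < P D)
    (T : Ω → ℕ) (hTdef : ∀ ω, T ω = sInf {n : ℕ | 0 < n ∧ θ^[n] ω ∈ D})
    (hTfin : ∀ᵐ ω ∂P, ∃ n : ℕ, 0 < n ∧ θ^[n] ω ∈ D)
    (hThat : ∫⁻ ω, (T ω : ENNReal) ∂(P[|D]) < ⊤) :
    (∫⁻ ω, (T ω : ENNReal) ∂(P[|D])) * (∫⁻ ω, (T ω : ENNReal) ∂P)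
        = ∫⁻ ω, ((T ω : ENNReal) ^ 2 + (T ω : ENNReal)) / 2 ∂(P[|D])
    ∧ (∫⁻ ω, (T ω : ENNReal) ∂P < ⊤ →
        (∫⁻ ω, (T ω : ENNReal) ^ 2 ∂(P[|D])
            = 2 * (∫⁻ ω, (T ω : ENNReal) ∂P) * (∫⁻ ω, (T ω : ENNReal) ∂(P[|D]))
              - ∫⁻ ω, (T ω : ENNReal) ∂(P[|D]))
          ∧ ∫⁻ ω, (T ω : ENNReal) ^ 2 ∂(P[|D]) < ⊤) :=
  stmt_12_general (m0 := m0) P θ hθ D hD T hTdef hTfin hThat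
end

section
/- In the setting of Kac's formula: with T the first return time to D and P̂ = P(·|D), one has Ê[T]·E[T^2] = Ê[T(T+1)(2T+1)/6]; in particular if E[T^2] < ∞ and Ê[T] < ∞ then Ê[T^3] < ∞. -/
/-!
Kac's formula `∫ g dP = ∫_D ∑_{k < T} g ∘ θ^[k+1] dP`, applied to `g = φ ∘ T`: along an excursion
from `D` the return time counts down `T - 1, …, 1`, and the last term `φ (T ∘ θ^[T])` integrates
over `D` like `φ ∘ T`, because the induced map `ω ↦ θ^[T ω] ω` preserves `P` on `D`. Hence
`E[φ(T)] = ∫_D ∑_{j=1}^{T} φ(j) dP`. For `φ = 1` this is `∫_D T dP = 1`, i.e. `Ê[T] = 1 / P(D)`,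
and for `φ(n) = n²` it is `E[T²] = ∫_D T(T+1)(2T+1)/6 dP`.
-/

open MeasureTheory Function ProbabilityTheory Filter Finset Topology
open scoped ENNReal

section FirstReturn

variable {Ω : Type*} (θ : Ω → Ω) (D : Set Ω)

noncomputable def firstReturn (ω : Ω) : ℕ := sInf {n : ℕ | 0 < n ∧ θ^[n] ω ∈ D}

variable {θ D} {ω : Ω}

lemma firstReturn_pos_and_iterate_mem (h : ∃ n, 0 < n ∧ θ^[n] ω ∈ D) :
    0 < firstReturn θ D ω ∧ θ^[firstReturn θ D ω] ω ∈ D :=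
  Nat.sInf_mem h

lemma firstReturn_le {n : ℕ} (hn : 0 < n) (hnD : θ^[n] ω ∈ D) : firstReturn θ D ω ≤ n :=
  Nat.sInf_le ⟨hn, hnD⟩

lemma iterate_notMem_of_lt_firstReturn {j : ℕ} (hj : 0 < j) (hjT : j < firstReturn θ D ω) :
    θ^[j] ω ∉ D :=
  fun hD ↦ Nat.notMem_of_lt_sInf hjT ⟨hj, hD⟩

lemma lt_firstReturn_iff (h : ∃ n, 0 < n ∧ θ^[n] ω ∈ D) {k : ℕ} :
    k < firstReturn θ D ω ↔ ∀ j < k, θ^[j + 1] ω ∉ D := by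
  refine ⟨fun hk j hj ↦ iterate_notMem_of_lt_firstReturn j.succ_pos (by omega), fun hk ↦ ?_⟩
  by_contra! hle
  obtain ⟨hpos, hmem⟩ := firstReturn_pos_and_iterate_mem h
  exact hk (firstReturn θ D ω - 1) (by omega) (by rwa [Nat.sub_add_cancel hpos])

lemma firstReturn_le_iff {k : ℕ} :
    firstReturn θ D ω ≤ k ↔ (∀ n, 0 < n → θ^[n] ω ∉ D) ∨ ∃ n, 0 < n ∧ n ≤ k ∧ θ^[n] ω ∈ D := by
  by_cases h : ∃ n, 0 < n ∧ θ^[n] ω ∈ D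
  · obtain ⟨n, hn, hnD⟩ := h
    obtain ⟨hpos, hmem⟩ := firstReturn_pos_and_iterate_mem ⟨n, hn, hnD⟩
    refine ⟨fun hk ↦ .inr ⟨_, hpos, hk, hmem⟩, ?_⟩
    rintro (hnone | ⟨m, hm, hmk, hmD⟩)
    · exact absurd hnD (hnone n hn)
    · exact (firstReturn_le hm hmD).trans hmk
  · simp only [not_exists, not_and] at h
    have hempty : {n : ℕ | 0 < n ∧ θ^[n] ω ∈ D} = ∅ :=
      Set.eq_empty_of_forall_notMem fun n hn ↦ h n hn.1 hn.2
    simp only [firstReturn, hempty, Nat.sInf_empty, zero_le, true_iff]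
    exact .inl h

lemma firstReturn_iterate (h : ∃ n, 0 < n ∧ θ^[n] ω ∈ D) {k : ℕ}
    (hk : k < firstReturn θ D ω) : firstReturn θ D (θ^[k] ω) = firstReturn θ D ω - k := by
  have hret : θ^[firstReturn θ D ω - k] (θ^[k] ω) ∈ D := by
    rw [← iterate_add_apply, Nat.sub_add_cancel hk.le]
    exact (firstReturn_pos_and_iterate_mem h).2
  obtain ⟨hpos, hmem⟩ := firstReturn_pos_and_iterate_mem ⟨_, Nat.sub_pos_of_lt hk, hret⟩
  refine le_antisymm (firstReturn_le (Nat.sub_pos_of_lt hk) hret) ?_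
  by_contra! hlt
  rw [← iterate_add_apply] at hmem
  exact iterate_notMem_of_lt_firstReturn (by omega) (by omega) hmem

lemma sum_range_firstReturn_comp_iterate (h : ∃ n, 0 < n ∧ θ^[n] ω ∈ D) (φ : ℕ → ℝ≥0∞) :
    ∑ k ∈ range (firstReturn θ D ω), φ (firstReturn θ D (θ^[k + 1] ω)) =
      ∑ j ∈ range (firstReturn θ D ω - 1), φ (j + 1) +
        φ (firstReturn θ D (θ^[firstReturn θ D ω] ω)) := by
  obtain ⟨m, hm⟩ : ∃ m, firstReturn θ D ω = m + 1 :=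
    ⟨_, (Nat.succ_pred_eq_of_pos (firstReturn_pos_and_iterate_mem h).1).symm⟩
  rw [hm, sum_range_succ, Nat.add_sub_cancel, ← sum_range_reflect]
  congr 1
  refine sum_congr rfl fun k hk ↦ ?_
  rw [mem_range] at hk
  rw [firstReturn_iterate h (by omega), hm]
  congr 1
  omega

end FirstReturn

section Kac

variable {Ω : Type*} [MeasurableSpace Ω] {P : Measure Ω} {θ : Ω → Ω} {D : Set Ω}

lemma measurable_firstReturn (hθ : Measurable θ) (hD : MeasurableSet D) :
    Measurable (firstReturn θ D) := by
  refine measurable_of_Iic fun k ↦ ?_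
  have hset : firstReturn θ D ⁻¹' Set.Iic k =
      (⋂ n, ⋂ _ : 0 < n, (θ^[n] ⁻¹' D)ᶜ) ∪ ⋃ n, ⋃ _ : 0 < n, ⋃ _ : n ≤ k, θ^[n] ⁻¹' D := by
    ext ω
    simp [firstReturn_le_iff, and_left_comm]
  rw [hset]
  exact .union (.iInter fun n ↦ .iInter fun _ ↦ (hθ.iterate n hD).compl)
    (.iUnion fun n ↦ .iUnion fun _ ↦ .iUnion fun _ ↦ hθ.iterate n hD)

theorem measure_eq_tsum_measure_lt_firstReturn [IsFiniteMeasure P] (hθ : MeasurePreserving θ P P)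
    (hD : MeasurableSet D) (hret : ∀ᵐ ω ∂P, ∃ n, 0 < n ∧ θ^[n] ω ∈ D) {A : Set Ω}
    (hA : MeasurableSet A) :
    P A = ∑' k, P (θ^[k + 1] ⁻¹' A ∩ ({ω | k < firstReturn θ D ω} ∩ D)) := by
  have hθm := hθ.measurable
  set E : ℕ → Set Ω := fun N ↦ {ω | ∀ j < N, θ^[j] ω ∉ D}
  have hE : ∀ N, MeasurableSet (E N) := fun N ↦ by
    simp only [E, Set.ofPred_forall]
    exact .iInter fun j ↦ .iInter fun _ ↦ (hθm.iterate j hD).compl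
  set F : ℕ → ℝ≥0∞ := fun k ↦ P (θ^[k + 1] ⁻¹' A ∩ ({ω | k < firstReturn θ D ω} ∩ D))
  -- Points that have avoided `D` up to time `N` either enter `D` at time `N + 1` or keep avoiding it.
  have hstep : ∀ N, P (E N ∩ θ^[N] ⁻¹' A) = F N + P (E (N + 1) ∩ θ^[N + 1] ⁻¹' A) := by
    intro N
    rw [← hθ.measure_preimage ((hE N).inter (hθm.iterate N hA)).nullMeasurableSet,
      ← measure_inter_add_sdiff _ hD]
    congr 1
    · refine measure_congr (eventuallyEq_set.2 (hret.mono fun ω hω ↦ ?_))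
      simp only [E, Set.preimage_inter, Set.preimage_ofPred_eq, Set.mem_inter_iff,
        Set.mem_ofPred_eq, Set.mem_preimage, lt_firstReturn_iff hω, iterate_succ_apply]
      tauto
    · congr 1
      ext ω
      simp only [E, Set.mem_sdiff, Set.mem_inter_iff, Set.mem_preimage, Set.mem_ofPred_eq,
        Nat.forall_lt_succ_left, iterate_zero_apply, iterate_succ_apply]
      tauto
  have htele : ∀ N, P A = ∑ k ∈ range N, F k + P (E N ∩ θ^[N] ⁻¹' A) := by
    intro N
    induction N with
    | zero => simp [E]
    | succ N ih => rw [ih, hstep, sum_range_succ, add_assoc]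
  have hrem : Tendsto (fun N ↦ P (E N ∩ θ^[N] ⁻¹' A)) atTop (𝓝 0) := by
    have hnull : P (⋂ N, E N) = 0 := by
      refine measure_mono_null (fun ω hω ↦ ?_) (ae_iff.1 hret)
      rintro ⟨n, -, hn⟩
      exact Set.mem_iInter.1 hω (n + 1) n n.lt_succ_self hn
    have hE0 : Tendsto (fun N ↦ P (E N)) atTop (𝓝 0) := by
      rw [← hnull]
      exact tendsto_measure_iInter_atTop (fun N ↦ (hE N).nullMeasurableSet)
        (fun _ _ hMN _ hω j hj ↦ hω j (hj.trans_le hMN)) ⟨0, measure_ne_top _ _⟩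
    exact tendsto_of_tendsto_of_tendsto_of_le_of_le tendsto_const_nhds hE0
      (fun _ ↦ zero_le) fun N ↦ measure_mono Set.inter_subset_left
  have hlim := (ENNReal.tendsto_nat_tsum F).add hrem
  simp only [← htele, add_zero] at hlim
  exact tendsto_nhds_unique tendsto_const_nhds hlim

/-- Kac's formula. -/
theorem lintegral_eq_setLIntegral_sum_firstReturn [IsFiniteMeasure P]
    (hθ : MeasurePreserving θ P P) (hD : MeasurableSet D)
    (hret : ∀ᵐ ω ∂P, ∃ n, 0 < n ∧ θ^[n] ω ∈ D) {g : Ω → ℝ≥0∞} (hg : Measurable g) :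
    ∫⁻ ω, g ω ∂P = ∫⁻ ω in D, ∑ k ∈ range (firstReturn θ D ω), g (θ^[k + 1] ω) ∂P := by
  have hθm := hθ.measurable
  have hlt : ∀ k, MeasurableSet {ω | k < firstReturn θ D ω} := fun k ↦
    measurableSet_lt measurable_const (measurable_firstReturn hθm hD)
  have hP : P = Measure.sum fun k ↦
      (P.restrict ({ω | k < firstReturn θ D ω} ∩ D)).map θ^[k + 1] := by
    ext A hA
    simp only [Measure.sum_apply _ hA, Measure.map_apply (hθm.iterate _) hA,
      Measure.restrict_apply (hθm.iterate _ hA)]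
    exact measure_eq_tsum_measure_lt_firstReturn hθ hD hret hA
  calc ∫⁻ ω, g ω ∂P
      = ∑' k, ∫⁻ ω in D, {ω | k < firstReturn θ D ω}.indicator (g ∘ θ^[k + 1]) ω ∂P := by
        conv_lhs => rw [hP]
        simp only [lintegral_sum_measure, lintegral_map hg (hθm.iterate _),
          lintegral_indicator (hlt _), Measure.restrict_restrict (hlt _), comp_apply]
    _ = ∫⁻ ω in D, ∑' k, {ω | k < firstReturn θ D ω}.indicator (g ∘ θ^[k + 1]) ω ∂P :=
        (lintegral_tsum fun k ↦ ((hg.comp (hθm.iterate _)).indicator (hlt k)).aemeasurable).symm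
    _ = ∫⁻ ω in D, ∑ k ∈ range (firstReturn θ D ω), g (θ^[k + 1] ω) ∂P := by
        congr 1
        funext ω
        rw [sum_eq_tsum_indicator]
        congr 1
        funext k
        simp [Set.indicator_apply]

/-- The induced map `ω ↦ θ^[firstReturn θ D ω] ω` preserves `P` restricted to `D`. -/
theorem setLIntegral_comp_iterate_firstReturn [IsFiniteMeasure P]
    (hθ : MeasurePreserving θ P P) (hD : MeasurableSet D)
    (hret : ∀ᵐ ω ∂P, ∃ n, 0 < n ∧ θ^[n] ω ∈ D) {f : Ω → ℝ≥0∞} (hf : Measurable f) :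
    ∫⁻ ω in D, f (θ^[firstReturn θ D ω] ω) ∂P = ∫⁻ ω in D, f ω ∂P := by
  conv_rhs => rw [← lintegral_indicator hD,
    lintegral_eq_setLIntegral_sum_firstReturn hθ hD hret (hf.indicator hD)]
  refine setLIntegral_congr_fun_ae hD (hret.mono fun ω hω hωD ↦ ?_)
  obtain ⟨hpos, hmem⟩ := firstReturn_pos_and_iterate_mem hω
  rw [← Nat.sub_add_cancel hpos, sum_range_succ, Nat.sub_add_cancel hpos,
    Set.indicator_of_mem hmem, sum_eq_zero, zero_add]
  intro k hk
  exact Set.indicator_of_notMem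
    (iterate_notMem_of_lt_firstReturn k.succ_pos (by rw [mem_range] at hk; omega)) _

theorem lintegral_comp_firstReturn [IsFiniteMeasure P]
    (hθ : MeasurePreserving θ P P) (hD : MeasurableSet D)
    (hret : ∀ᵐ ω ∂P, ∃ n, 0 < n ∧ θ^[n] ω ∈ D) (φ : ℕ → ℝ≥0∞) :
    ∫⁻ ω, φ (firstReturn θ D ω) ∂P = ∫⁻ ω in D, ∑ j ∈ range (firstReturn θ D ω), φ (j + 1) ∂P := by
  have hT := measurable_firstReturn hθ.measurable hD
  have hφT : Measurable fun ω ↦ φ (firstReturn θ D ω) := measurable_from_top.comp hT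
  have hsum : Measurable fun ω ↦ ∑ j ∈ range (firstReturn θ D ω - 1), φ (j + 1) :=
    (measurable_from_top (f := fun n ↦ ∑ j ∈ range (n - 1), φ (j + 1))).comp hT
  calc ∫⁻ ω, φ (firstReturn θ D ω) ∂P
      = ∫⁻ ω in D, ∑ j ∈ range (firstReturn θ D ω - 1), φ (j + 1) +
          φ (firstReturn θ D (θ^[firstReturn θ D ω] ω)) ∂P := by
        rw [lintegral_eq_setLIntegral_sum_firstReturn hθ hD hret hφT]
        exact setLIntegral_congr_fun_ae hD
          (hret.mono fun ω hω _ ↦ sum_range_firstReturn_comp_iterate hω φ)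
    _ = ∫⁻ ω in D, ∑ j ∈ range (firstReturn θ D ω - 1), φ (j + 1) + φ (firstReturn θ D ω) ∂P := by
        rw [lintegral_add_left hsum, lintegral_add_left hsum,
          setLIntegral_comp_iterate_firstReturn hθ hD hret hφT]
    _ = ∫⁻ ω in D, ∑ j ∈ range (firstReturn θ D ω), φ (j + 1) ∂P := by
        refine setLIntegral_congr_fun_ae hD (hret.mono fun ω hω _ ↦ ?_)
        obtain ⟨hpos, -⟩ := firstReturn_pos_and_iterate_mem hω
        conv_rhs => rw [← Nat.sub_add_cancel hpos, sum_range_succ]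
        rw [Nat.sub_add_cancel hpos]

end Kac

lemma sum_range_succ_sq_eq (n : ℕ) :
    ∑ j ∈ range n, ((j : ℝ≥0∞) + 1) ^ 2 = (n : ℝ≥0∞) * (n + 1) * (2 * n + 1) / 6 := by
  have hnat : ∑ j ∈ range n, (j + 1) ^ 2 * 6 = n * (n + 1) * (2 * n + 1) := by
    induction n with
    | zero => simp
    | succ n ih => rw [sum_range_succ, ih]; ring
  rw [ENNReal.eq_div_iff (by norm_num) (by norm_num), mul_comm, sum_mul]
  exact_mod_cast hnat

lemma pow_three_le_mul_succ_mul_two_mul_succ (n : ℕ) : n ^ 3 ≤ n * (n + 1) * (2 * n + 1) :=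
  calc n ^ 3 = n * n * n := by ring
    _ ≤ n * (n + 1) * (2 * n + 1) := by gcongr <;> omega

theorem stmt_13_general {Ω : Type*} {m0 : MeasurableSpace Ω} (P : Measure Ω) [IsProbabilityMeasure P]
    (θ : Ω → Ω) (hθ : MeasurePreserving θ P P)
    (D : Set Ω) (hD : MeasurableSet D)
    (T : Ω → ℕ) (hTdef : ∀ ω, T ω = sInf {n : ℕ | 0 < n ∧ θ^[n] ω ∈ D})
    (hTfin : ∀ᵐ ω ∂P, ∃ n : ℕ, 0 < n ∧ θ^[n] ω ∈ D) :
    (∫⁻ ω, (T ω : ENNReal) ∂(P[|D])) * (∫⁻ ω, (T ω : ENNReal) ^ 2 ∂P)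
        = ∫⁻ ω, (T ω : ENNReal) * ((T ω : ENNReal) + 1) * (2 * (T ω : ENNReal) + 1) / 6 ∂(P[|D])
    ∧ (∫⁻ ω, (T ω : ENNReal) ^ 2 ∂P < ⊤ →
        ∫⁻ ω, (T ω : ENNReal) ∂(P[|D]) < ⊤ →
        ∫⁻ ω, (T ω : ENNReal) ^ 3 ∂(P[|D]) < ⊤) := by
  obtain rfl : T = firstReturn θ D := funext hTdef
  have hcond (f : Ω → ℝ≥0∞) : ∫⁻ ω, f ω ∂(P[|D]) = (P D)⁻¹ * ∫⁻ ω in D, f ω ∂P := by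
    rw [ProbabilityTheory.cond, lintegral_smul_measure, smul_eq_mul]
  have hmean : ∫⁻ ω in D, (firstReturn θ D ω : ℝ≥0∞) ∂P = 1 := by
    simpa using (lintegral_comp_firstReturn hθ hD hTfin fun _ ↦ 1).symm
  have hsecond := lintegral_comp_firstReturn hθ hD hTfin fun n ↦ (n : ℝ≥0∞) ^ 2
  simp only [Nat.cast_add, Nat.cast_one, sum_range_succ_sq_eq] at hsecond
  have hidentity : (∫⁻ ω, (firstReturn θ D ω : ℝ≥0∞) ∂(P[|D])) *
      ∫⁻ ω, (firstReturn θ D ω : ℝ≥0∞) ^ 2 ∂P = ∫⁻ ω, (firstReturn θ D ω : ℝ≥0∞) *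
        (firstReturn θ D ω + 1) * (2 * firstReturn θ D ω + 1) / 6 ∂(P[|D]) := by
    rw [hcond, hcond, hmean, mul_one, hsecond]
  refine ⟨hidentity, fun h2 h1 ↦ ?_⟩
  calc ∫⁻ ω, (firstReturn θ D ω : ℝ≥0∞) ^ 3 ∂(P[|D])
      ≤ ∫⁻ ω, 6 * ((firstReturn θ D ω : ℝ≥0∞) *
          (firstReturn θ D ω + 1) * (2 * firstReturn θ D ω + 1) / 6) ∂(P[|D]) := by
        refine lintegral_mono fun ω ↦ ?_
        rw [ENNReal.mul_div_cancel (by norm_num) (by norm_num)]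
        norm_cast
        exact Nat.cast_le.2 (pow_three_le_mul_succ_mul_two_mul_succ _)
    _ < ⊤ := by
        rw [lintegral_const_mul' _ _ (by norm_num), ← hidentity]
        exact ENNReal.mul_lt_top (by norm_num) (ENNReal.mul_lt_top h1 h2)

/-- In the Kac setting, `Ê[T]·E[T²] = Ê[T(T+1)(2T+1)/6]`; in particular if
`E[T²] < ∞` and `Ê[T] < ∞` then `Ê[T³] < ∞`. -/
theorem stmt_13 {Ω : Type*} {m0 : MeasurableSpace Ω} (P : Measure Ω) [IsProbabilityMeasure P]
    (θ : Ω → Ω) (hθ : MeasurePreserving θ P P) (hergodic : Ergodic θ P)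
    (D : Set Ω) (hD : MeasurableSet D) (hDpos : 0 < P D)
    (T : Ω → ℕ) (hTdef : ∀ ω, T ω = sInf {n : ℕ | 0 < n ∧ θ^[n] ω ∈ D})
    (hTfin : ∀ᵐ ω ∂P, ∃ n : ℕ, 0 < n ∧ θ^[n] ω ∈ D) :
    (∫⁻ ω, (T ω : ENNReal) ∂(P[|D])) * (∫⁻ ω, (T ω : ENNReal) ^ 2 ∂P)
        = ∫⁻ ω, (T ω : ENNReal) * ((T ω : ENNReal) + 1) * (2 * (T ω : ENNReal) + 1) / 6 ∂(P[|D])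
    ∧ (∫⁻ ω, (T ω : ENNReal) ^ 2 ∂P < ⊤ →
        ∫⁻ ω, (T ω : ENNReal) ∂(P[|D]) < ⊤ →
        ∫⁻ ω, (T ω : ENNReal) ^ 3 ∂(P[|D]) < ⊤) :=
  stmt_13_general (m0 := m0) P θ hθ D hD T hTdef hTfin
end
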